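/- Let V : [0,∞) × [λ̲,∞) → ℝ satisfy: (i) V(x,λ) ≥ x for all (x,λ); (ii) V(x₂,λ) − V(x₁,λ) ≥ x₂ − x₁ whenever 0 ≤ x₁ ≤ x₂ (slope at least 1 in the first argument); (iii) for each fixed x the map λ' ↦ V(x,λ') is non-increasing. Let x̂ ≥ 0 and suppose g satisfies g(x,λ') = (x − x̂) + g(x̂,λ') for all x ≥ x̂ and all λ'. Fix M ≥ x̂ and λ > λ̲ such that λ' ↦ V(M,λ') is differentiable at λ, and define V_M(x,λ') = V(x,λ') for x ≤ M and V_M(x,λ') = V(M,λ') + x − M for x > M. Then for every x > M, V_M is differentiable at (x,λ) with ∂ₓV_M(x,λ) = 1 and ∂_λV_M(x,λ) = ∂_λV(M,λ), and ℒ(V_M)(x,λ) ≤ p − qM + ξ·(g(x̂,λ) − x̂) − d(λ − λ̲)·∂_λV(M,λ). -/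

import Mathlib

/-!
Beyond `M` the truncation `V_M` is affine of slope one in `x`, which gives both derivatives.
Since `V_M(·,λ)` is nondecreasing and `V_M(x,·)` nonincreasing, `V_M(x,λ)` dominates every state
reachable by a claim or by an intensity jump, so the two integral terms are at most
`(λ + β) V_M(x,λ)`. What remains is `-q V_M(x,λ) + ξ (g(x,λ) - V_M(x,λ))`, bounded using
`V_M(x,λ) = V(M,λ) + x - M ≥ M` and the affine form of `g`.
-/

open MeasureTheory Set Filter Topology

/-- The integro-differential operator `ℒ` of the HJB equation, applied to a function `W`
whose partial derivatives at `(x,λ)` are `Wx` and `Wl`. -/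
noncomputable def Lop (p d q β ξ lb : ℝ) (μ ν : Measure ℝ) (g : ℝ → ℝ → ℝ)
    (W : ℝ → ℝ → ℝ) (Wx Wl : ℝ) (x l : ℝ) : ℝ :=
  p * Wx - d * (l - lb) * Wl - (q + l + β) * W x l
    + l * ∫ α in Set.Icc (0:ℝ) x, W (x - α) l ∂μ
    + β * ∫ γ, W x (l + γ) ∂ν
    + ξ * (g x l - W x l)

theorem integral_le_of_ae_le_of_measure_univ_le_one {α : Type*} [MeasurableSpace α]
    {m : Measure α} (hm : m univ ≤ 1) {f : α → ℝ} {C : ℝ} (hC : 0 ≤ C)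
    (hf : ∀ᵐ a ∂m, f a ≤ C) : ∫ a, f a ∂m ≤ C := by
  have : IsFiniteMeasure m := ⟨hm.trans_lt ENNReal.one_lt_top⟩
  by_cases hfi : Integrable f m
  · have hmass : m.real univ ≤ 1 := ENNReal.toReal_le_of_le_ofReal zero_le_one (by simpa using hm)
    calc ∫ a, f a ∂m ≤ ∫ _, C ∂m := integral_mono_ae hfi (integrable_const C) hf
      _ = m.real univ * C := by rw [integral_const, smul_eq_mul]
      _ ≤ 1 * C := by gcongr
      _ = C := one_mul C
  · rw [integral_undef hfi]
    exact hC

/-- The nonlocal terms of `ℒ` can only lower its value at a state `(x,l)` where `W` dominates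
every state reachable by a claim or an intensity jump. -/
theorem Lop_le_of_jump_values_le {p d q β ξ lb : ℝ} (hβ : 0 ≤ β) {μ ν : Measure ℝ}
    [IsProbabilityMeasure μ] [IsProbabilityMeasure ν] {g W : ℝ → ℝ → ℝ} {Wx Wl x l : ℝ}
    (hl : 0 ≤ l) (hW : 0 ≤ W x l) (hclaim : ∀ α ∈ Icc 0 x, W (x - α) l ≤ W x l)
    (hjump : ∀ᵐ γ ∂ν, W x (l + γ) ≤ W x l) :
    Lop p d q β ξ lb μ ν g W Wx Wl x l ≤
      p * Wx - d * (l - lb) * Wl - q * W x l + ξ * (g x l - W x l) := by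
  have hclaim_int : ∫ α in Icc 0 x, W (x - α) l ∂μ ≤ W x l :=
    integral_le_of_ae_le_of_measure_univ_le_one
      (by rw [Measure.restrict_apply_univ]; exact prob_le_one) hW
      ((ae_restrict_iff' measurableSet_Icc).2 (ae_of_all _ hclaim))
  have hjump_int : ∫ γ, W x (l + γ) ∂ν ≤ W x l :=
    integral_le_of_ae_le_of_measure_univ_le_one prob_le_one hW hjump
  unfold Lop
  linarith [mul_le_mul_of_nonneg_left hclaim_int hl, mul_le_mul_of_nonneg_left hjump_int hβ]

section Truncation

variable (V : ℝ → ℝ → ℝ) {M x : ℝ}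

noncomputable def truncateAt (M x l : ℝ) : ℝ := if x ≤ M then V x l else V M l + x - M

theorem truncateAt_of_lt (hx : M < x) (l : ℝ) : truncateAt V M x l = V M l + x - M :=
  if_neg (not_le.2 hx)

theorem hasDerivAt_truncateAt_fst (hx : M < x) (l : ℝ) :
    HasDerivAt (fun y => truncateAt V M y l) 1 x := by
  have hline : HasDerivAt (fun y => V M l + y - M) 1 x := by
    simpa using ((hasDerivAt_id x).const_add (V M l)).sub_const M
  refine hline.congr_of_eventuallyEq ?_
  filter_upwards [Ioi_mem_nhds hx] with y hy using truncateAt_of_lt V hy l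

theorem hasDerivAt_truncateAt_snd (hx : M < x) {l v : ℝ} (hV : HasDerivAt (V M) v l) :
    HasDerivAt (fun l' => truncateAt V M x l') v l := by
  simpa only [truncateAt_of_lt V hx] using (hV.add_const x).sub_const M

theorem monotoneOn_truncateAt {l : ℝ} (hV : MonotoneOn (fun y => V y l) (Ici 0)) :
    MonotoneOn (fun y => truncateAt V M y l) (Ici 0) := by
  intro y (hy : 0 ≤ y) z (hz : 0 ≤ z) hyz
  simp only [truncateAt]
  split_ifs with hyM hzM hzM
  · exact hV hy hz hyz
  · linarith [hV (mem_Ici.2 hy) (mem_Ici.2 (hy.trans hyM)) hyM]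
  · linarith
  · linarith

end Truncation

theorem truncated_value_supersolution_estimate_general
    (p d q β ξ lb : ℝ) (hq : 0 < q) (hβ : 0 < β)
    (hξ : 0 < ξ) (hlb : 0 < lb)
    (μ ν : Measure ℝ) [IsProbabilityMeasure μ] [IsProbabilityMeasure ν]
    (hν : ν (Set.Iic 0) = 0)
    (g : ℝ → ℝ → ℝ)
    (V : ℝ → ℝ → ℝ)
    (hV_ge : ∀ x l, 0 ≤ x → lb ≤ l → x ≤ V x l)
    (hV_slope : ∀ x₁ x₂ l, 0 ≤ x₁ → x₁ ≤ x₂ → lb ≤ l → x₂ - x₁ ≤ V x₂ l - V x₁ l)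
    (hV_antitone : ∀ x l₁ l₂, 0 ≤ x → lb ≤ l₁ → l₁ ≤ l₂ → V x l₂ ≤ V x l₁)
    (xhat : ℝ) (hxhat : 0 ≤ xhat)
    (hg_affine : ∀ x l, xhat ≤ x → lb ≤ l → g x l = (x - xhat) + g xhat l)
    (M l : ℝ) (hM : xhat ≤ M) (hl : lb < l)
    (hVdiff : DifferentiableAt ℝ (fun l' => V M l') l)
    (VM : ℝ → ℝ → ℝ)
    (hVM : ∀ x l', VM x l' = if x ≤ M then V x l' else V M l' + x - M)
    (x : ℝ) (hx : M < x) :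
    HasDerivAt (fun y => VM y l) 1 x ∧
    HasDerivAt (fun l' => VM x l') (deriv (fun l' => V M l') l) l ∧
    Lop p d q β ξ lb μ ν g VM 1 (deriv (fun l' => V M l') l) x l ≤
      p - q * M + ξ * (g xhat l - xhat) - d * (l - lb) * deriv (fun l' => V M l') l := by
  obtain rfl : VM = truncateAt V M := funext fun y => funext (hVM y)
  refine ⟨hasDerivAt_truncateAt_fst V hx l,
    hasDerivAt_truncateAt_snd V hx hVdiff.hasDerivAt, ?_⟩
  have hM0 : 0 ≤ M := hxhat.trans hM
  have hVM_ge : M ≤ V M l := hV_ge M l hM0 hl.le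
  have hmono : MonotoneOn (fun y => truncateAt V M y l) (Ici 0) :=
    monotoneOn_truncateAt V fun a ha b _ hab => by linarith [hV_slope a b l ha hab hl.le]
  have hclaim : ∀ α ∈ Icc 0 x, truncateAt V M (x - α) l ≤ truncateAt V M x l :=
    fun α ⟨hα0, hαx⟩ => hmono (sub_nonneg.2 hαx) (hM0.trans hx.le) (by linarith)
  have hjump : ∀ᵐ γ ∂ν, truncateAt V M x (l + γ) ≤ truncateAt V M x l := by
    filter_upwards [ae_iff.2 (measure_mono_null (fun γ (hγ : ¬ 0 < γ) => not_lt.1 hγ) hν)]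
      with γ hγ
    simp only [truncateAt_of_lt V hx]
    linarith [hV_antitone M l (l + γ) hM0 hl.le (by linarith)]
  refine (Lop_le_of_jump_values_le hβ.le (hlb.trans hl).le
    (by rw [truncateAt_of_lt V hx]; linarith) hclaim hjump).trans ?_
  rw [truncateAt_of_lt V hx, hg_affine x l (hM.trans hx.le) hl.le]
  linarith [mul_nonneg hq.le (show 0 ≤ V M l + x - M - M by linarith),
    mul_nonneg hξ.le (sub_nonneg.2 hVM_ge)]

/-- Key estimate in the proof of Proposition 4.1: for `x > M` the truncated value
function `V_M` is differentiable at `(x,λ)` with `∂ₓV_M = 1` and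
`∂_λV_M(x,λ) = ∂_λV(M,λ)`, and `ℒ(V_M)(x,λ) ≤ p − qM + ξ(g(x̂,λ) − x̂) − d(λ−λ̲)∂_λV(M,λ)`. -/
theorem truncated_value_supersolution_estimate
    (p d q β ξ lb : ℝ) (hp : 0 < p) (hd : 0 < d) (hq : 0 < q) (hβ : 0 < β)
    (hξ : 0 < ξ) (hlb : 0 < lb)
    (μ ν : Measure ℝ) [IsProbabilityMeasure μ] [IsProbabilityMeasure ν]
    (hμ : μ (Set.Iio 0) = 0) (hν : ν (Set.Iic 0) = 0)
    (g : ℝ → ℝ → ℝ) (hg_meas : Measurable (fun q : ℝ × ℝ => g q.1 q.2))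
    (hg_nonneg : ∀ x l, 0 ≤ x → lb ≤ l → 0 ≤ g x l)
    (V : ℝ → ℝ → ℝ)
    (hV_ge : ∀ x l, 0 ≤ x → lb ≤ l → x ≤ V x l)
    (hV_slope : ∀ x₁ x₂ l, 0 ≤ x₁ → x₁ ≤ x₂ → lb ≤ l → x₂ - x₁ ≤ V x₂ l - V x₁ l)
    (hV_antitone : ∀ x l₁ l₂, 0 ≤ x → lb ≤ l₁ → l₁ ≤ l₂ → V x l₂ ≤ V x l₁)
    (xhat : ℝ) (hxhat : 0 ≤ xhat)
    (hg_affine : ∀ x l, xhat ≤ x → lb ≤ l → g x l = (x - xhat) + g xhat l)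
    (M l : ℝ) (hM : xhat ≤ M) (hl : lb < l)
    (hVdiff : DifferentiableAt ℝ (fun l' => V M l') l)
    (VM : ℝ → ℝ → ℝ)
    (hVM : ∀ x l', VM x l' = if x ≤ M then V x l' else V M l' + x - M)
    (x : ℝ) (hx : M < x) :
    HasDerivAt (fun y => VM y l) 1 x ∧
    HasDerivAt (fun l' => VM x l') (deriv (fun l' => V M l') l) l ∧
    Lop p d q β ξ lb μ ν g VM 1 (deriv (fun l' => V M l') l) x l ≤
      p - q * M + ξ * (g xhat l - xhat) - d * (l - lb) * deriv (fun l' => V M l') l :=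
  truncated_value_supersolution_estimate_general p d q β ξ lb hq hβ hξ hlb μ ν hν g V hV_ge hV_slope
    hV_antitone xhat hxhat hg_affine M l hM hl hVdiff VM hVM x hx
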